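/- arXiv:math/9502203 — 4 statements merged into one kernel-verified Lean document; each statement's English description precedes it below -/
import Mathlib

section
/- In the amalgamation setting: (a) every sequence ⟨aₖ⟩ ∈ Cₙ (for any n) has no lower bound in (A_t, <_t); (b) the diagonal sequence ⟨uₖ⟩ defined by u_{2n} = aⁿₙ and u_{2n+1} = bⁿₙ is strictly <_t-descending (u_{k+1} <_t u_k for all k) and has no lower bound in (A_t, <_t). -/
open Cardinal Set

noncomputable section

/-- A partial function from ordinals to ordinals, represented by its graph. -/
abbrev ColFun := Set (Ordinal × Ordinal)

/-- `q ∈ Col(X)`: `q` is (the graph of) a function whose domain is an ordinal `< ω₁`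
and whose range is a subset of `X`. -/
def IsColFun (X : Set Ordinal) (q : ColFun) : Prop :=
  (∀ a b b', (a, b) ∈ q → (a, b') ∈ q → b = b') ∧
  (∃ δ : Ordinal, δ < (aleph 1).ord ∧ ∀ a : Ordinal, (∃ b, (a, b) ∈ q) ↔ a < δ) ∧
  (∀ a b, (a, b) ∈ q → b ∈ X)

/-- A quadruple `((A, <), B, C, F)`; `F` is a partial function represented by its graph. -/
structure Quad where
  A : Set Ordinal
  lt : Ordinal → Ordinal → Prop
  B : Set (Ordinal × ColFun)
  C : Set (ℕ → Ordinal)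
  F : Set ((ℕ → Ordinal) × (Ordinal × ColFun) × ℕ)

namespace Quad

/-- `x ≤ᵣ y`. -/
def leR (r : Quad) (x y : Ordinal) : Prop := r.lt x y ∨ x = y

/-- `x ⊥ᵣ y`: no `z ∈ Aᵣ` with `z ≤ᵣ x` and `z ≤ᵣ y`. -/
def Incomp (r : Quad) (x y : Ordinal) : Prop := ¬ ∃ z ∈ r.A, r.leR z x ∧ r.leR z y

/-- `r` is a forcing condition. -/
def IsCond (r : Quad) : Prop :=
  -- (1) A is a countable set of ordinals < ω₂
  r.A.Countable ∧
  (∀ a ∈ r.A, a < (aleph 2).ord) ∧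
  -- (2) <ᵣ is a strict partial order on A
  (∀ a b, r.lt a b → a ∈ r.A ∧ b ∈ r.A) ∧
  (∀ a b c, r.lt a b → r.lt b c → r.lt a c) ∧
  -- (3) b <ᵣ a implies a < b (whence <ᵣ is irreflexive and asymmetric)
  (∀ a b, r.lt b a → a < b) ∧
  -- (4) B is a countable subset of A × Col(A) with p ∈ range q for (p,q) ∈ B
  r.B.Countable ∧
  (∀ pq ∈ r.B, pq.1 ∈ r.A ∧ IsColFun r.A pq.2 ∧ ∃ α, (α, pq.1) ∈ pq.2) ∧
  -- (5) C is a countable set of <ᵣ-descending sequences in A without lower bound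
  r.C.Countable ∧
  (∀ a ∈ r.C, (∀ n, a n ∈ r.A) ∧ (∀ n, r.lt (a (n + 1)) (a n)) ∧
    ¬ ∃ z ∈ r.A, ∀ n, r.leR z (a n)) ∧
  -- (6) F is a (partial) function whose domain consists exactly of the pairs
  -- (⟨aₙ⟩, (p,q)) with ⟨aₙ⟩ ∈ C, (p,q) ∈ B, p ≥ a₀, satisfying (*)
  (∀ x ∈ r.F, x.1 ∈ r.C ∧ x.2.1 ∈ r.B ∧ x.1 0 ≤ x.2.1.1) ∧
  (∀ a pq, a ∈ r.C → pq ∈ r.B → a 0 ≤ pq.1 → ∃! m : ℕ, (a, pq, m) ∈ r.F) ∧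
  (∀ a pq m, (a, pq, m) ∈ r.F →
    ∀ p'q' ∈ r.B, r.leR p'q'.1 pq.1 → pq.2 ⊆ p'q'.2 →
      r.lt p'q'.1 (a m) → ∃ k, r.Incomp p'q'.1 (a k))

/-- `Ext r s`: `r ≤_R s`, i.e. `r` is stronger than `s`. -/
def Ext (r s : Quad) : Prop :=
  s.A ⊆ r.A ∧
  (∀ a ∈ s.A, ∀ b ∈ s.A, (r.lt a b ↔ s.lt a b)) ∧
  (∀ a ∈ s.A, ∀ b ∈ s.A, (r.Incomp a b ↔ s.Incomp a b)) ∧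
  s.B ⊆ r.B ∧ s.C ⊆ r.C ∧ s.F ⊆ r.F

end Quad

open Quad

/-- Push a `Col`-function forward along a map of ordinals (acting on the range). -/
def mapCol (f : Ordinal → Ordinal) (q : ColFun) : ColFun :=
  {x | ∃ a b, (a, b) ∈ q ∧ x = (a, f b)}

/-- The amalgamation setting: a sequence of conditions forming a Δ-system with root `D`,
a commutative system of isomorphisms `π`, and descending chains `cⁿ` matched by `π`. -/
structure Amalg where
  r : ℕ → Quad
  cond : ∀ n, (r n).IsCond
  D : Set Ordinal
  inter : ∀ m n : ℕ, m < n → (r m).A ∩ (r n).A = D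
  supD_lt : ∀ m : ℕ, ∀ x ∈ (r m).A \ D, sSup D < x
  supA_lt : ∀ m n : ℕ, m < n → ∀ x ∈ (r n).A \ D, sSup (r m).A < x
  lt_agree : ∀ m n : ℕ, ∀ a ∈ D, ∀ b ∈ D, ((r m).lt a b ↔ (r n).lt a b)
  incomp_agree : ∀ m n : ℕ, ∀ a ∈ D, ∀ b ∈ D, ((r m).Incomp a b ↔ (r n).Incomp a b)
  B_agree : ∀ m n : ℕ, ∀ pq : Ordinal × ColFun, pq.1 ∈ D → IsColFun D pq.2 →
    (pq ∈ (r m).B ↔ pq ∈ (r n).B)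
  C_agree : ∀ m n : ℕ, ∀ a : ℕ → Ordinal, (∀ k, a k ∈ D) → (a ∈ (r m).C ↔ a ∈ (r n).C)
  pi : ℕ → ℕ → Ordinal → Ordinal
  pi_mem : ∀ m n : ℕ, ∀ x ∈ (r m).A, pi m n x ∈ (r n).A
  pi_id : ∀ m : ℕ, ∀ x ∈ (r m).A, pi m m x = x
  pi_inv : ∀ m n : ℕ, ∀ x ∈ (r m).A, pi n m (pi m n x) = x
  pi_comm : ∀ m n k : ℕ, ∀ x ∈ (r m).A, pi n k (pi m n x) = pi m k x
  pi_idD : ∀ m n : ℕ, ∀ x ∈ D, pi m n x = x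
  pi_iso : ∀ m n : ℕ, ∀ x ∈ (r m).A, ∀ y ∈ (r m).A,
    ((r m).lt x y ↔ (r n).lt (pi m n x) (pi m n y))
  pi_B : ∀ m n : ℕ, ∀ pq ∈ (r m).B, (pi m n pq.1, mapCol (pi m n) pq.2) ∈ (r n).B
  pi_C : ∀ m n : ℕ, ∀ a ∈ (r m).C, (fun k => pi m n (a k)) ∈ (r n).C
  pi_F : ∀ m n : ℕ, ∀ x ∈ (r m).F,
    ((fun k => pi m n (x.1 k)), (pi m n x.2.1.1, mapCol (pi m n) x.2.1.2), x.2.2) ∈ (r n).F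
  c : ℕ → ℕ → Ordinal
  c_mem : ∀ n k : ℕ, c n k ∈ (r n).A \ D
  c_dec : ∀ n k : ℕ, (r n).lt (c n (k + 1)) (c n k)
  pi_c : ∀ m n k : ℕ, pi m n (c m k) = c n k

namespace Amalg

/-- `A_t = ⋃ₙ Aₙ`. -/
def At (S : Amalg) : Set Ordinal := ⋃ n, (S.r n).A

/-- `<_t`: the transitive closure of the union of the `<ₙ` together with the pairs
`aⁿ⁺¹ₙ₊₁ <_t bⁿₙ` (recall `aⁿₖ = cⁿ₂ₖ` and `bⁿₖ = cⁿ₂ₖ₊₁`). -/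
def ltT (S : Amalg) : Ordinal → Ordinal → Prop :=
  Relation.TransGen (fun x y =>
    (∃ n, (S.r n).lt x y) ∨ ∃ n : ℕ, x = S.c (n + 1) (2 * (n + 1)) ∧ y = S.c n (2 * n + 1))

/-- `x ≤_t y`. -/
def leT (S : Amalg) (x y : Ordinal) : Prop := S.ltT x y ∨ x = y

/-- `x` and `y` are compatible in `<_t`. -/
def CompatT (S : Amalg) (x y : Ordinal) : Prop := ∃ z ∈ S.At, S.leT z x ∧ S.leT z y

end Amalg

/-!
Every generator of `<_t` lowers the ordinal: inside a level by clause (3), and across levels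
because `aⁿ⁺¹ₙ₊₁ ∉ D` lies above `sup Aₙ`. So no element of `Aₘ` is `≤_t` the diagonal term
`aᵐ⁺¹ₘ₊₁`, which gives the lower-bound part of (b). For (a), transporting every generator into
a fixed level `m` by the isomorphisms `π` shows that `x <_t y` with `x ∈ Aₘ`, `y ∈ Aₙ` forces
`x <ₘ π_{nm}(y)`; hence a lower bound in `Aₘ` of `⟨aₖ⟩ ∈ Cₙ` would bound `π_{nm}⟨aₖ⟩ ∈ Cₘ`.
-/

namespace Quad.IsCond

variable {r : Quad}

lemma mem_of_lt (hr : r.IsCond) {a b : Ordinal} (h : r.lt a b) : a ∈ r.A ∧ b ∈ r.A :=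
  hr.2.2.1 a b h

lemma lt_trans (hr : r.IsCond) {a b c : Ordinal} (hab : r.lt a b) (hbc : r.lt b c) : r.lt a c :=
  hr.2.2.2.1 a b c hab hbc

lemma gt_of_lt (hr : r.IsCond) {a b : Ordinal} (h : r.lt a b) : b < a :=
  hr.2.2.2.2.1 b a h

lemma bddAbove_A (hr : r.IsCond) : BddAbove r.A :=
  ⟨(aleph 2).ord, fun a ha => (hr.2.1 a ha).le⟩

lemma mem_A_of_mem_C (hr : r.IsCond) {a : ℕ → Ordinal} (ha : a ∈ r.C) (k : ℕ) : a k ∈ r.A :=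
  (hr.2.2.2.2.2.2.2.2.1 a ha).1 k

lemma lt_succ_of_mem_C (hr : r.IsCond) {a : ℕ → Ordinal} (ha : a ∈ r.C) (k : ℕ) :
    r.lt (a (k + 1)) (a k) :=
  (hr.2.2.2.2.2.2.2.2.1 a ha).2.1 k

lemma not_bddBelow_of_mem_C (hr : r.IsCond) {a : ℕ → Ordinal} (ha : a ∈ r.C) :
    ¬ ∃ z ∈ r.A, ∀ k, r.leR z (a k) :=
  (hr.2.2.2.2.2.2.2.2.1 a ha).2.2

end Quad.IsCond

namespace Amalg

/-- `ltT` is by definition `Relation.TransGen LtGen`. -/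
def LtGen (S : Amalg) (x y : Ordinal) : Prop :=
  (∃ n, (S.r n).lt x y) ∨ ∃ n : ℕ, x = S.c (n + 1) (2 * (n + 1)) ∧ y = S.c n (2 * n + 1)

variable (S : Amalg)

lemma ltT_of_lt {n : ℕ} {x y : Ordinal} (h : (S.r n).lt x y) : S.ltT x y :=
  Relation.TransGen.single (Or.inl ⟨n, h⟩)

lemma ltT_of_leT_of_ltT {x y z : Ordinal} (hxy : S.leT x y) (hyz : S.ltT y z) : S.ltT x z := by
  rcases hxy with hxy | rfl
  exacts [hxy.trans hyz, hyz]

lemma eq_of_mem_of_notMem_D {x : Ordinal} {m n : ℕ} (hm : x ∈ (S.r m).A) (hn : x ∈ (S.r n).A)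
    (hx : x ∉ S.D) : m = n := by
  rcases lt_trichotomy m n with h | h | h
  · exact absurd (S.inter m n h ▸ ⟨hm, hn⟩) hx
  · exact h
  · exact absurd (S.inter n m h ▸ ⟨hn, hm⟩) hx

lemma pi_eq_of_mem {x : Ordinal} {k n : ℕ} (hk : x ∈ (S.r k).A) (hn : x ∈ (S.r n).A) (m : ℕ) :
    S.pi k m x = S.pi n m x := by
  by_cases hx : x ∈ S.D
  · rw [S.pi_idD k m x hx, S.pi_idD n m x hx]
  · rw [S.eq_of_mem_of_notMem_D hk hn hx]

lemma pi_eq_self_of_mem {x : Ordinal} {k m : ℕ} (hk : x ∈ (S.r k).A) (hm : x ∈ (S.r m).A) :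
    S.pi k m x = x :=
  (S.pi_eq_of_mem hk hm m).trans (S.pi_id m x hm)

lemma lt_of_ltGen {x y : Ordinal} (h : S.LtGen x y) : y < x := by
  rcases h with ⟨n, h⟩ | ⟨n, rfl, rfl⟩
  · exact (S.cond n).gt_of_lt h
  · calc S.c n (2 * n + 1) ≤ sSup (S.r n).A :=
          le_csSup (S.cond n).bddAbove_A (S.c_mem n _).1
      _ < S.c (n + 1) (2 * (n + 1)) := S.supA_lt n (n + 1) n.lt_succ_self _ (S.c_mem _ _)

lemma lt_of_ltT {x y : Ordinal} (h : S.ltT x y) : y < x := by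
  induction h with
  | single h => exact S.lt_of_ltGen h
  | tail _ h ih => exact (S.lt_of_ltGen h).trans ih

lemma le_of_leT {x y : Ordinal} (h : S.leT x y) : y ≤ x := by
  rcases h with h | rfl
  exacts [(S.lt_of_ltT h).le, le_rfl]

lemma exists_mem_of_ltGen {x y : Ordinal} (h : S.LtGen x y) : ∃ l, y ∈ (S.r l).A := by
  rcases h with ⟨n, h⟩ | ⟨n, -, rfl⟩
  exacts [⟨n, ((S.cond n).mem_of_lt h).2⟩, ⟨n, (S.c_mem n _).1⟩]

lemma lt_pi_of_ltGen {x y : Ordinal} {m n : ℕ} (hx : x ∈ (S.r m).A) (hy : y ∈ (S.r n).A)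
    (h : S.LtGen x y) : (S.r m).lt x (S.pi n m y) := by
  rcases h with ⟨k, h⟩ | ⟨j, rfl, rfl⟩
  · obtain ⟨hxk, hyk⟩ := (S.cond k).mem_of_lt h
    have h' := (S.pi_iso k m x hxk y hyk).1 h
    rwa [S.pi_eq_self_of_mem hxk hx, S.pi_eq_of_mem hyk hy] at h'
  · rw [← S.pi_eq_self_of_mem (S.c_mem _ _).1 hx, ← S.pi_eq_of_mem (S.c_mem j _).1 hy,
      S.pi_c, S.pi_c]
    exact S.c_dec m _

lemma lt_pi_of_ltT {x y : Ordinal} {m n : ℕ} (hx : x ∈ (S.r m).A) (hy : y ∈ (S.r n).A)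
    (h : S.ltT x y) : (S.r m).lt x (S.pi n m y) := by
  induction h using Relation.TransGen.head_induction_on generalizing m with
  | single h => exact S.lt_pi_of_ltGen hx hy h
  | @head x w hxw _ ih =>
    obtain ⟨l, hw⟩ := S.exists_mem_of_ltGen hxw
    have hwy := (S.pi_iso l m w hw _ (S.pi_mem n l y hy)).1 (ih hw)
    rw [S.pi_comm n l m y hy] at hwy
    exact (S.cond m).lt_trans (S.lt_pi_of_ltGen hx hw hxw) hwy

lemma not_bddBelow_of_mem_C {n : ℕ} {a : ℕ → Ordinal} (ha : a ∈ (S.r n).C) :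
    ¬ ∃ z ∈ S.At, ∀ k, S.leT z (a k) := by
  rintro ⟨z, hz, hza⟩
  obtain ⟨m, hzm⟩ := mem_iUnion.1 hz
  refine (S.cond m).not_bddBelow_of_mem_C (S.pi_C n m a ha) ⟨z, hzm, fun k => Or.inl ?_⟩
  refine S.lt_pi_of_ltT hzm ((S.cond n).mem_A_of_mem_C ha k) ?_
  exact S.ltT_of_leT_of_ltT (hza (k + 1)) (S.ltT_of_lt ((S.cond n).lt_succ_of_mem_C ha k))

lemma diag_ltT_succ (k : ℕ) : S.ltT (S.c ((k + 1) / 2) (k + 1)) (S.c (k / 2) k) := by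
  obtain ⟨t, rfl | rfl⟩ := Nat.even_or_odd' k
  · rw [show (2 * t + 1) / 2 = t by omega, show 2 * t / 2 = t by omega]
    exact S.ltT_of_lt (S.c_dec t (2 * t))
  · rw [show (2 * t + 1 + 1) / 2 = t + 1 by omega, show (2 * t + 1) / 2 = t by omega]
    exact Relation.TransGen.single (Or.inr ⟨t, by rw [mul_add, mul_one], rfl⟩)

lemma diag_not_bddBelow : ¬ ∃ z ∈ S.At, ∀ k : ℕ, S.leT z (S.c (k / 2) k) := by
  rintro ⟨z, hz, hzu⟩
  obtain ⟨m, hzm⟩ := mem_iUnion.1 hz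
  have hu := S.le_of_leT (hzu (2 * (m + 1)))
  rw [show 2 * (m + 1) / 2 = m + 1 by omega] at hu
  have hz_le : z ≤ sSup (S.r m).A := le_csSup (S.cond m).bddAbove_A hzm
  exact (hu.trans hz_le).not_gt (S.supA_lt m (m + 1) m.lt_succ_self _ (S.c_mem _ _))

end Amalg

/-- (a) Every `⟨aₖ⟩ ∈ Cₙ` has no lower bound in `(A_t, <_t)`; (b) the diagonal sequence
`u₂ₙ = aⁿₙ, u₂ₙ₊₁ = bⁿₙ` (i.e. `uₖ = c (k/2) k`) is strictly `<_t`-descending and has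
no lower bound in `(A_t, <_t)`. -/
theorem stmt9 (S : Amalg) :
    (∀ n : ℕ, ∀ a ∈ (S.r n).C, ¬ ∃ z ∈ S.At, ∀ k, S.leT z (a k)) ∧
    (∀ k : ℕ, S.ltT (S.c ((k + 1) / 2) (k + 1)) (S.c (k / 2) k)) ∧
    ¬ ∃ z ∈ S.At, ∀ k : ℕ, S.leT z (S.c (k / 2) k) :=
  ⟨fun _ _ ha => S.not_bddBelow_of_mem_C ha, S.diag_ltT_succ, S.diag_not_bddBelow⟩
end
end

section
/- In the amalgamation setting, let B_t = ⋃ₙ Bₙ. For all k and n: if (p,q) ∈ B_k ∖ Bₙ and (p',q') ∈ B_t satisfies p' ≤_t p and q ⊆ q', then (p',q') ∈ B_k ∖ Bₙ. -/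
open Cardinal Set

noncomputable section

open Quad

/-!
Since `(p, q) ∉ Bₙ`, the pair does not lie in the common root `D × Col(D)`, so the
range of `q` contains some `w ∈ A_k ∖ D` (either `p` itself or a value of `q`). As `q ⊆ q'`, the
same `w` lies in the range of `q'`, hence in `A_j` for any `j` with `(p', q') ∈ B_j`; by the
Δ-system property, `w` belongs to no `A_j` other than `A_k`. So `(p', q') ∈ B_k` and `∉ Bₙ`.
-/

namespace Quad

theorem IsCond.mem_A_of_mem_range {r : Quad} (hr : r.IsCond) {pq : Ordinal × ColFun}
    (hpq : pq ∈ r.B) {a w : Ordinal} (haw : (a, w) ∈ pq.2) : w ∈ r.A :=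
  (hr.2.2.2.2.2.2.1 pq hpq).2.1.2.2 a w haw

end Quad

namespace Amalg

variable (S : Amalg)

theorem inter_eq_of_ne {m m' : ℕ} (h : m ≠ m') : (S.r m).A ∩ (S.r m').A = S.D := by
  rcases h.lt_or_gt with h | h
  · exact S.inter m m' h
  · rw [inter_comm]
    exact S.inter m' m h

theorem eq_of_mem_A_of_notMem_D {m m' : ℕ} {w : Ordinal} (hm : w ∈ (S.r m).A)
    (hm' : w ∈ (S.r m').A) (hw : w ∉ S.D) : m = m' := by
  by_contra h
  exact hw (S.inter_eq_of_ne h ▸ ⟨hm, hm'⟩)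

theorem exists_range_notMem_D {k n : ℕ} {pq : Ordinal × ColFun}
    (hpq : pq ∈ (S.r k).B \ (S.r n).B) : ∃ a w, (a, w) ∈ pq.2 ∧ w ∉ S.D := by
  obtain ⟨hk, hn⟩ := hpq
  obtain ⟨-, hq, a, hap⟩ := (S.cond k).2.2.2.2.2.2.1 pq hk
  by_cases hpD : pq.1 ∈ S.D
  · by_contra! hqD
    have hqColD : IsColFun S.D pq.2 := ⟨hq.1, hq.2.1, hqD⟩
    exact hn ((S.B_agree k n pq hpD hqColD).1 hk)
  · exact ⟨a, pq.1, hap, hpD⟩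

theorem eq_of_mem_B_of_range_notMem_D {j m : ℕ} {pq : Ordinal × ColFun} (hj : pq ∈ (S.r j).B)
    {a w : Ordinal} (haw : (a, w) ∈ pq.2) (hwm : w ∈ (S.r m).A) (hw : w ∉ S.D) : j = m :=
  S.eq_of_mem_A_of_notMem_D ((S.cond j).mem_A_of_mem_range hj haw) hwm hw

end Amalg

theorem stmt10_general (S : Amalg) (k n : ℕ) (pq : Ordinal × ColFun)
    (hpq : pq ∈ (S.r k).B \ (S.r n).B)
    (p'q' : Ordinal × ColFun) (hBt : p'q' ∈ ⋃ j, (S.r j).B)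
    (hsub : pq.2 ⊆ p'q'.2) :
    p'q' ∈ (S.r k).B \ (S.r n).B := by
  obtain ⟨a, w, haw, hwD⟩ := S.exists_range_notMem_D hpq
  have hwk : w ∈ (S.r k).A := (S.cond k).mem_A_of_mem_range hpq.1 haw
  have haw' : (a, w) ∈ p'q'.2 := hsub haw
  obtain ⟨j, hj⟩ := mem_iUnion.1 hBt
  obtain rfl : j = k := S.eq_of_mem_B_of_range_notMem_D hj haw' hwk hwD
  refine ⟨hj, fun hn => ?_⟩
  obtain rfl : n = j := S.eq_of_mem_B_of_range_notMem_D hn haw' hwk hwD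
  exact hpq.2 hpq.1

/-- Lemma 8: if `(p,q) ∈ B_k ∖ Bₙ` and `(p',q') ∈ B_t` is stronger than `(p,q)`
(in `≤_t`), then `(p',q') ∈ B_k ∖ Bₙ`. -/
theorem stmt10 (S : Amalg) (k n : ℕ) (pq : Ordinal × ColFun)
    (hpq : pq ∈ (S.r k).B \ (S.r n).B)
    (p'q' : Ordinal × ColFun) (hBt : p'q' ∈ ⋃ j, (S.r j).B)
    (hle : S.leT p'q'.1 pq.1) (hsub : pq.2 ⊆ p'q'.2) :
    p'q' ∈ (S.r k).B \ (S.r n).B :=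
  stmt10_general S k n pq hpq p'q' hBt hsub
end
end

section
/- Let P be a partial order in which every element has a strictly smaller element, let B be a complete Boolean algebra, let e : P → B be an order embedding (a ≤ b ↔ e(a) ≤ e(b)) with e(a) ≠ ⊥ for all a and with dense image in B ∖ {⊥}, and let D ⊆ B ∖ {⊥} be dense and σ-closed. Define a ≺ b iff a < b in P and there exists d ∈ D with e(a) ≤ d ≤ e(b). Then: (i) ≺ is transitive; (ii) a ≺ b implies a < b in P; (iii) for every a ∈ P there exists b ∈ P with b ≺ a; and (iv) for every sequence ⟨aₙ : n ∈ ℕ⟩ in P with aₙ₊₁ ≺ aₙ for all n, there exists p ∈ P with p ≺ aₙ for all n. -/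
/-!
Every nonzero `d ∈ B` lies above some `e q`, and below `e q` sits `e p` for any `p < q`; since
`e` reflects the order, `p` is strictly below every `a` with `d ≤ e a`. Taking `d ∈ D` below `e a`
gives a `≺`-smaller element, and taking `d ∈ D` below the decreasing witnesses of a `≺`-chain
(by σ-closedness) gives a `≺`-lower bound of the chain.
-/

/-- `a ≺ b` in the notation of the statement. -/
def LtThrough {P B : Type*} [Preorder P] [LE B] (e : P → B) (D : Set B) (a b : P) : Prop :=
  a < b ∧ ∃ d ∈ D, e a ≤ d ∧ d ≤ e b

section

variable {P B : Type*} [Preorder P]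

theorem LtThrough.trans [Preorder B] {e : P → B} {D : Set B} {a b c : P}
    (hab : LtThrough e D a b) (hbc : LtThrough e D b c) : LtThrough e D a c := by
  obtain ⟨hab, d, hdD, had, hdb⟩ := hab
  obtain ⟨hbc, d', -, hbd', hd'c⟩ := hbc
  exact ⟨hab.trans hbc, d, hdD, had, hdb.trans (hbd'.trans hd'c)⟩

variable [Preorder B] [OrderBot B] {e : P → B}

theorem exists_le_and_forall_lt_of_ne_bot (hP : ∀ a : P, ∃ b, b < a)
    (hemb : ∀ a b : P, a ≤ b ↔ e a ≤ e b) (hdense : ∀ b : B, b ≠ ⊥ → ∃ a : P, e a ≤ b)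
    {d : B} (hd : d ≠ ⊥) : ∃ p : P, e p ≤ d ∧ ∀ a, d ≤ e a → p < a := by
  obtain ⟨q, hqd⟩ := hdense d hd
  obtain ⟨p, hpq⟩ := hP q
  exact ⟨p, ((hemb p q).mp hpq.le).trans hqd,
    fun a hda => hpq.trans_le ((hemb q a).mpr (hqd.trans hda))⟩

variable {D : Set B}

theorem exists_ltThrough (hP : ∀ a : P, ∃ b, b < a)
    (hemb : ∀ a b : P, a ≤ b ↔ e a ≤ e b) (hdense : ∀ b : B, b ≠ ⊥ → ∃ a : P, e a ≤ b)
    (hDne : ∀ d ∈ D, d ≠ ⊥) (hne : ∀ a : P, e a ≠ ⊥)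
    (hDdense : ∀ b : B, b ≠ ⊥ → ∃ d ∈ D, d ≤ b) (a : P) : ∃ b, LtThrough e D b a := by
  obtain ⟨d, hdD, hda⟩ := hDdense (e a) (hne a)
  obtain ⟨p, hpd, hlt⟩ := exists_le_and_forall_lt_of_ne_bot hP hemb hdense (hDne d hdD)
  exact ⟨p, hlt a hda, d, hdD, hpd, hda⟩

theorem exists_forall_ltThrough_of_chain (hP : ∀ a : P, ∃ b, b < a)
    (hemb : ∀ a b : P, a ≤ b ↔ e a ≤ e b) (hdense : ∀ b : B, b ≠ ⊥ → ∃ a : P, e a ≤ b)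
    (hDne : ∀ d ∈ D, d ≠ ⊥)
    (hDsigma : ∀ s : ℕ → B, (∀ n, s n ∈ D) → (∀ n, s (n + 1) ≤ s n) → ∃ d ∈ D, ∀ n, d ≤ s n)
    {a : ℕ → P} (ha : ∀ n, LtThrough e D (a (n + 1)) (a n)) :
    ∃ p, ∀ n, LtThrough e D p (a n) := by
  choose d hdD hed hde using fun n => (ha n).2
  obtain ⟨c, hcD, hcd⟩ := hDsigma d hdD fun n => (hde (n + 1)).trans (hed n)
  obtain ⟨p, hpc, hlt⟩ := exists_le_and_forall_lt_of_ne_bot hP hemb hdense (hDne c hcD)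
  have hca : ∀ n, c ≤ e (a n) := fun n => (hcd n).trans (hde n)
  exact ⟨p, fun n => ⟨hlt _ (hca n), c, hcD, hpc, hca n⟩⟩

end

/-- Properties of the auxiliary ordering `≺` (`a ≺ b ↔ a < b ∧ ∃ d ∈ D, e a ≤ d ≤ e b`)
used in the proof that `B(P)` is not countably closed: it is transitive, refines `<`,
every element has a `≺`-smaller one, and `(P, ≺)` is σ-closed. -/
theorem stmt11 {P : Type*} [PartialOrder P] (hP : ∀ a : P, ∃ b, b < a)
    {B : Type*} [CompleteBooleanAlgebra B] (e : P → B)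
    (hemb : ∀ a b : P, a ≤ b ↔ e a ≤ e b) (hne : ∀ a : P, e a ≠ ⊥)
    (hdense : ∀ b : B, b ≠ ⊥ → ∃ a : P, e a ≤ b)
    (D : Set B) (hDne : ∀ d ∈ D, d ≠ ⊥)
    (hDdense : ∀ b : B, b ≠ ⊥ → ∃ d ∈ D, d ≤ b)
    (hDsigma : ∀ s : ℕ → B, (∀ n, s n ∈ D) → (∀ n, s (n + 1) ≤ s n) →
      ∃ d ∈ D, ∀ n, d ≤ s n) :
    (∀ a b c : P, (a < b ∧ ∃ d ∈ D, e a ≤ d ∧ d ≤ e b) →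
      (b < c ∧ ∃ d ∈ D, e b ≤ d ∧ d ≤ e c) → (a < c ∧ ∃ d ∈ D, e a ≤ d ∧ d ≤ e c)) ∧
    (∀ a b : P, (a < b ∧ ∃ d ∈ D, e a ≤ d ∧ d ≤ e b) → a < b) ∧
    (∀ a : P, ∃ b : P, b < a ∧ ∃ d ∈ D, e b ≤ d ∧ d ≤ e a) ∧
    (∀ a : ℕ → P, (∀ n, a (n + 1) < a n ∧ ∃ d ∈ D, e (a (n + 1)) ≤ d ∧ d ≤ e (a n)) →
      ∃ p : P, ∀ n, p < a n ∧ ∃ d ∈ D, e p ≤ d ∧ d ≤ e (a n)) :=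
  ⟨fun _ _ _ => LtThrough.trans, fun _ _ h => h.1,
    exists_ltThrough hP hemb hdense hDne hne hDdense,
    fun _ => exists_forall_ltThrough_of_chain hP hemb hdense hDne hDsigma⟩
end

section
/- If B is a game-closed complete Boolean algebra and A is a complete subalgebra of B, then A is a game-closed complete Boolean algebra. -/
noncomputable section

variable {B : Type*} [CompleteBooleanAlgebra B]

/-- A position in the game `G(B)` relative to a subset `A ⊆ B`: an odd-length
`≤`-decreasing list of nonzero elements of `A` (listed as `[b₀, …, b₂ₙ]`). -/
def ValidPos (A : Set B) (l : List B) : Prop :=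
  Odd l.length ∧ l.Chain' (fun x y => y ≤ x) ∧ ∀ x ∈ l, x ∈ A ∧ x ≠ ⊥

/-- `σ` is a winning strategy for player II in the game `G` played on the subset `A` of `B`:
at every position `(b₀, …, b₂ₙ)` it answers with a nonzero `b₂ₙ₊₁ ∈ A`, `b₂ₙ₊₁ ≤ b₂ₙ`,
and every infinite play consistent with `σ` has a nonzero lower bound in `A`. -/
def IsWinningStrategyOn (A : Set B) (σ : List B → B) : Prop :=
  (∀ l : List B, ValidPos A l → σ l ∈ A ∧ σ l ≠ ⊥ ∧ ∀ h : l ≠ [], σ l ≤ l.getLast h) ∧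
  (∀ b : ℕ → B, (∀ n, b n ∈ A) → (∀ n, b n ≠ ⊥) → (∀ n, b (n + 1) ≤ b n) →
    (∀ n, b (2 * n + 1) = σ (List.ofFn fun i : Fin (2 * n + 1) => b i)) →
    ∃ z ∈ A, z ≠ ⊥ ∧ ∀ n, z ≤ b n)

/-- `A ⊆ B` (with the induced structure) is game-closed: player II has a winning
strategy in the descending-chain game on `A`. -/
def GameClosedOn (A : Set B) : Prop :=
  ∃ σ : List B → B, IsWinningStrategyOn A σ

/-- The complete Boolean algebra `B` is game-closed. -/
def GameClosed (B : Type*) [CompleteBooleanAlgebra B] : Prop :=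
  GameClosedOn (Set.univ : Set B)

/-- `A ⊆ B` (with the induced structure) is countably closed: the nonzero elements of `A`
have a dense σ-closed subset. -/
def CountablyClosedOn (A : Set B) : Prop :=
  ∃ S : Set B, S ⊆ A ∧ (∀ s ∈ S, s ≠ ⊥) ∧
    (∀ b ∈ A, b ≠ ⊥ → ∃ s ∈ S, s ≤ b) ∧
    (∀ f : ℕ → B, (∀ n, f n ∈ S) → (∀ n, f (n + 1) ≤ f n) → ∃ z ∈ S, ∀ n, z ≤ f n)

/-- The complete Boolean algebra `B` is countably closed. -/
def CountablyClosed (B : Type*) [CompleteBooleanAlgebra B] : Prop :=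
  CountablyClosedOn (Set.univ : Set B)

/-- `A` is a complete subalgebra of `B`: a Boolean subalgebra closed under arbitrary
suprema and infima computed in `B`. -/
def IsCompleteSubalgebra (A : Set B) : Prop :=
  (⊥ : B) ∈ A ∧ (⊤ : B) ∈ A ∧
  (∀ x ∈ A, xᶜ ∈ A) ∧ (∀ x ∈ A, ∀ y ∈ A, x ⊔ y ∈ A) ∧ (∀ x ∈ A, ∀ y ∈ A, x ⊓ y ∈ A) ∧
  (∀ S : Set B, S ⊆ A → sSup S ∈ A) ∧ (∀ S : Set B, S ⊆ A → sInf S ∈ A)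

/-!
Project `B` onto `A` by `x ↦ sInf {a ∈ A | x ≤ a}`. Given a winning strategy `σ` for II in
`G(B)`, II plays `G(A)` while running a shadow play in `B`: each move `a₂ₖ` of I is met with
the previous shadow answer, `b₂ₖ = a₂ₖ ⊓ b₂ₖ₋₁`, `σ` answers `b₂ₖ₊₁` in `B`, and II answers
the projection of `b₂ₖ₊₁` in `A`. As `A` is closed under complements, a nonzero `a ∈ A` below
the projection of `b` meets `b`, so the shadow play never reaches `⊥`; a nonzero lower bound of
it, which exists since `σ` wins, projects to a nonzero lower bound of the play in `A`.
-/

section Lists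

variable {α : Type*}

theorem getLastD_eq_getLast {l : List α} (h : l ≠ []) (d : α) : l.getLastD d = l.getLast h := by
  simp [List.getLastD_eq_getLast?, List.getLast?_eq_some_getLast h]

theorem getLastD_ofFn {n : ℕ} (f : Fin (n + 1) → α) (d : α) :
    (List.ofFn f).getLastD d = f (Fin.last n) := by
  rw [getLastD_eq_getLast (by simp), List.getLast_ofFn]
  rfl

theorem getD_ofFn {n : ℕ} (f : Fin n → α) (d : α) {j : ℕ} (h : j < n) :
    (List.ofFn f).getD j d = f ⟨j, h⟩ := by
  rw [List.getD_eq_getElem _ _ (by simpa using h), List.getElem_ofFn]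

end Lists

section Projection

variable {α : Type*} [CompleteLattice α]

def projOn (A : Set α) (x : α) : α := sInf {a | a ∈ A ∧ x ≤ a}

theorem le_projOn (A : Set α) (x : α) : x ≤ projOn A x :=
  le_sInf fun _ h => h.2

theorem projOn_le {A : Set α} {x a : α} (ha : a ∈ A) (h : x ≤ a) : projOn A x ≤ a :=
  sInf_le ⟨ha, h⟩

theorem projOn_ne_bot {A : Set α} {x : α} (hx : x ≠ ⊥) : projOn A x ≠ ⊥ :=
  ne_bot_of_le_ne_bot hx (le_projOn A x)

theorem projOn_mem {A : Set α} (hA : ∀ S ⊆ A, sInf S ∈ A) (x : α) : projOn A x ∈ A :=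
  hA _ fun _ h => h.1

end Projection

theorem inf_ne_bot_of_le_projOn {A : Set B} {a x : B} (hac : aᶜ ∈ A) (ha : a ≤ projOn A x)
    (ha0 : a ≠ ⊥) : a ⊓ x ≠ ⊥ := by
  intro hd
  have hx : x ≤ aᶜ := le_compl_iff_disjoint_left.2 (disjoint_iff.2 hd)
  exact ha0 (le_compl_self.1 (ha.trans (projOn_le hac hx)))

def IsLegalStrategyOn (A : Set B) (σ : List B → B) : Prop :=
  ∀ l : List B, ValidPos A l → σ l ∈ A ∧ σ l ≠ ⊥ ∧ ∀ h : l ≠ [], σ l ≤ l.getLast h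

theorem validPos_ofFn {A : Set B} {f : ℕ → B} {n : ℕ} (hn : Odd n)
    (hmem : ∀ i < n, f i ∈ A ∧ f i ≠ ⊥) (hdec : ∀ i, i + 1 < n → f (i + 1) ≤ f i) :
    ValidPos A (List.ofFn fun i : Fin n => f i) := by
  refine ⟨by simpa using hn, ?_, ?_⟩
  · rw [List.Chain', List.isChain_ofFn]
    exact hdec
  · intro x hx
    obtain ⟨i, rfl⟩ := List.mem_ofFn.1 hx
    exact hmem i i.isLt

def shadowPlay (σ : List B → B) (a : ℕ → B) : ℕ → B
  | 0 => a 0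
  | n + 1 =>
    if Even n then σ (List.ofFn fun i : Fin (n + 1) => shadowPlay σ a i)
    else a (n + 1) ⊓ shadowPlay σ a n

section ShadowPlay

variable (σ : List B → B) (a : ℕ → B)

theorem shadowPlay_zero : shadowPlay σ a 0 = a 0 := by
  rw [shadowPlay]

theorem shadowPlay_odd (k : ℕ) :
    shadowPlay σ a (2 * k + 1) = σ (List.ofFn fun i : Fin (2 * k + 1) => shadowPlay σ a i) := by
  rw [shadowPlay]
  simp

theorem shadowPlay_even_succ (k : ℕ) :
    shadowPlay σ a (2 * k + 2) = a (2 * k + 2) ⊓ shadowPlay σ a (2 * k + 1) := by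
  rw [shadowPlay]
  simp

theorem shadowPlay_even_le (k : ℕ) : shadowPlay σ a (2 * k) ≤ a (2 * k) := by
  cases k with
  | zero => exact (shadowPlay_zero σ a).le
  | succ k => exact (shadowPlay_even_succ σ a k).trans_le inf_le_left

theorem shadowPlay_congr {a' : ℕ → B} {n : ℕ} (h : ∀ i ≤ n, a i = a' i) :
    shadowPlay σ a n = shadowPlay σ a' n := by
  induction n using Nat.strong_induction_on with
  | _ n ih =>
    match n with
    | 0 => rw [shadowPlay, shadowPlay]; exact h 0 le_rfl
    | m + 1 =>
      rw [shadowPlay, shadowPlay]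
      split_ifs
      · congr 1
        exact List.ofFn_inj.2 <| funext fun i => ih i i.isLt fun j hj => h j (by omega)
      · rw [h (m + 1) le_rfl, ih m m.lt_succ_self fun j hj => h j (by omega)]

end ShadowPlay

open Classical in
/-- The fallback to the last move keeps the answer legal at positions that a play against this
strategy never reaches. -/
def shadowStrategy (A : Set B) (σ : List B → B) (l : List B) : B :=
  let c := projOn A (σ (List.ofFn fun i : Fin l.length => shadowPlay σ (l.getD · ⊥) i))
  if c ≠ ⊥ ∧ c ≤ l.getLastD ⊤ then c else l.getLastD ⊤

theorem isLegalStrategyOn_shadowStrategy {A : Set B} (hA : ∀ S ⊆ A, sInf S ∈ A)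
    (σ : List B → B) : IsLegalStrategyOn A (shadowStrategy A σ) := by
  intro l hl
  have hne : l ≠ [] := by
    rintro rfl
    simpa using hl.1
  have hlast := getLastD_eq_getLast hne ⊤
  obtain ⟨hlastA, hlast0⟩ := hl.2.2 _ (List.getLast_mem hne)
  simp only [shadowStrategy]
  split_ifs with h
  · exact ⟨projOn_mem hA _, h.1, fun _ => hlast ▸ h.2⟩
  · exact ⟨hlast ▸ hlastA, hlast ▸ hlast0, fun _ => hlast.le⟩

theorem shadowStrategy_ofFn {A : Set B} {σ : List B → B} {a : ℕ → B} {k : ℕ}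
    (h0 : projOn A (shadowPlay σ a (2 * k + 1)) ≠ ⊥)
    (hle : projOn A (shadowPlay σ a (2 * k + 1)) ≤ a (2 * k)) :
    shadowStrategy A σ (List.ofFn fun i : Fin (2 * k + 1) => a i) =
      projOn A (shadowPlay σ a (2 * k + 1)) := by
  have hshadow : (List.ofFn fun i : Fin (2 * k + 1) =>
      shadowPlay σ ((List.ofFn fun i : Fin (2 * k + 1) => a i).getD · ⊥) i) =
      List.ofFn fun i : Fin (2 * k + 1) => shadowPlay σ a i :=
    List.ofFn_inj.2 <| funext fun i =>
      shadowPlay_congr σ _ fun j hj => getD_ofFn _ _ (hj.trans_lt i.isLt)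
  simp only [shadowStrategy]
  rw [List.length_ofFn, hshadow, ← shadowPlay_odd σ a k, getLastD_ofFn]
  exact if_pos ⟨h0, hle⟩

theorem shadowPlay_odd_ne_bot_and_le {σ : List B → B} (hσ : IsLegalStrategyOn Set.univ σ)
    {a : ℕ → B} {k : ℕ} (h0 : ∀ i ≤ 2 * k, shadowPlay σ a i ≠ ⊥)
    (hdec : ∀ i < 2 * k, shadowPlay σ a (i + 1) ≤ shadowPlay σ a i) :
    shadowPlay σ a (2 * k + 1) ≠ ⊥ ∧ shadowPlay σ a (2 * k + 1) ≤ shadowPlay σ a (2 * k) := by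
  have hpos : ValidPos Set.univ (List.ofFn fun i : Fin (2 * k + 1) => shadowPlay σ a i) :=
    validPos_ofFn (odd_two_mul_add_one k) (fun i hi => ⟨trivial, h0 i (by omega)⟩)
      fun i hi => hdec i (by omega)
  obtain ⟨-, hne, hle⟩ := hσ _ hpos
  rw [← shadowPlay_odd σ a k] at hne hle
  exact ⟨hne, (hle (by simp)).trans_eq (List.getLast_ofFn _)⟩

theorem shadowPlay_even_succ_ne_bot {A : Set B} (hAc : ∀ x ∈ A, xᶜ ∈ A)
    {σ : List B → B} {a : ℕ → B} (haA : ∀ n, a n ∈ A)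
    (ha0 : ∀ n, a n ≠ ⊥) (hdec : ∀ n, a (n + 1) ≤ a n)
    (hcons : ∀ n, a (2 * n + 1) = shadowStrategy A σ (List.ofFn fun i : Fin (2 * n + 1) => a i))
    {k : ℕ} (h0 : shadowPlay σ a (2 * k + 1) ≠ ⊥)
    (hle : shadowPlay σ a (2 * k + 1) ≤ shadowPlay σ a (2 * k)) :
    shadowPlay σ a (2 * k + 2) ≠ ⊥ := by
  have hanswer : a (2 * k + 1) = projOn A (shadowPlay σ a (2 * k + 1)) :=
    (hcons k).trans <| shadowStrategy_ofFn (projOn_ne_bot h0)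
      (projOn_le (haA _) (hle.trans (shadowPlay_even_le σ a k)))
  rw [shadowPlay_even_succ]
  exact inf_ne_bot_of_le_projOn (hAc _ (haA _)) ((hdec _).trans hanswer.le) (ha0 _)

theorem shadowPlay_prefix_legal {A : Set B} (hAc : ∀ x ∈ A, xᶜ ∈ A) {σ : List B → B}
    (hσ : IsLegalStrategyOn Set.univ σ) {a : ℕ → B} (haA : ∀ n, a n ∈ A)
    (ha0 : ∀ n, a n ≠ ⊥) (hdec : ∀ n, a (n + 1) ≤ a n)
    (hcons : ∀ n, a (2 * n + 1) = shadowStrategy A σ (List.ofFn fun i : Fin (2 * n + 1) => a i))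
    (k : ℕ) :
    (∀ i ≤ 2 * k, shadowPlay σ a i ≠ ⊥) ∧
      ∀ i < 2 * k, shadowPlay σ a (i + 1) ≤ shadowPlay σ a i := by
  induction k with
  | zero =>
    refine ⟨fun i hi => ?_, fun i hi => absurd hi (Nat.not_lt_zero i)⟩
    obtain rfl : i = 0 := by omega
    simpa [shadowPlay_zero] using ha0 0
  | succ k ih =>
    obtain ⟨hodd0, hoddle⟩ := shadowPlay_odd_ne_bot_and_le hσ ih.1 ih.2
    have heven0 := shadowPlay_even_succ_ne_bot hAc haA ha0 hdec hcons hodd0 hoddle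
    have hevenle : shadowPlay σ a (2 * k + 2) ≤ shadowPlay σ a (2 * k + 1) :=
      (shadowPlay_even_succ σ a k).trans_le inf_le_right
    constructor
    · intro i hi
      obtain hi | rfl | rfl : i ≤ 2 * k ∨ i = 2 * k + 1 ∨ i = 2 * k + 2 := by omega
      exacts [ih.1 i hi, hodd0, heven0]
    · intro i hi
      obtain hi | rfl | rfl : i < 2 * k ∨ i = 2 * k ∨ i = 2 * k + 1 := by omega
      exacts [ih.2 i hi, hoddle, hevenle]

theorem le_of_forall_le_even {α : Type*} [Preorder α] {a : ℕ → α} (hdec : ∀ n, a (n + 1) ≤ a n)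
    {c : α}
    (hc : ∀ k, c ≤ a (2 * k)) (n : ℕ) : c ≤ a n :=
  (hc n).trans (antitone_nat_of_succ_le hdec (by omega))

/-- Game-closedness is hereditary: a complete subalgebra of a game-closed complete
Boolean algebra is game-closed. -/
theorem stmt12 {B : Type*} [CompleteBooleanAlgebra B] (hB : GameClosed B)
    (A : Set B) (hA : IsCompleteSubalgebra A) : GameClosedOn A := by
  obtain ⟨-, -, hAc, -, -, -, hAinf⟩ := hA
  obtain ⟨σ, hσ, hσwins⟩ := hB
  refine ⟨shadowStrategy A σ, isLegalStrategyOn_shadowStrategy hAinf σ, ?_⟩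
  intro a haA ha0 hdec hcons
  have hlegal := shadowPlay_prefix_legal hAc hσ haA ha0 hdec hcons
  obtain ⟨z, -, hz0, hz⟩ := hσwins (shadowPlay σ a) (fun _ => trivial)
    (fun n => (hlegal n).1 n (by omega)) (fun n => (hlegal (n + 1)).2 n (by omega))
    (shadowPlay_odd σ a)
  refine ⟨projOn A z, projOn_mem hAinf z, projOn_ne_bot hz0, le_of_forall_le_even hdec ?_⟩
  exact fun k => projOn_le (haA _) ((hz _).trans (shadowPlay_even_le σ a k))
end
end
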